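/- arXiv:1101.3587 — 3 statements merged into one kernel-verified Lean document; each statement's English description precedes it below -/
import Mathlib

section
/- For smooth functions p, q on the unit square Ω = (0,1)² with ∂_y p = 0 on {y=0,1} and ∂_x(1−∂_{yy})p = 0 on {x=0,1}, one has ⟨(1−∂_{xx})(1−∂_{yy})p, q⟩_{L²} = ⟨p,q⟩ + ⟨∂_x p, ∂_x q⟩ + ⟨∂_y p, ∂_y q⟩ + ⟨∂_{xy} p, ∂_{xy} q⟩; in particular ⟨Ap, p⟩ = ‖p‖²_{L²} + ‖∇p‖²_{L²} + ‖∂_{xy}p‖²_{L²} ≥ ‖∇p‖²_{L²}. -/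
open MeasureTheory intervalIntegral

noncomputable def pdx1 (f : ℝ × ℝ → ℝ) : ℝ × ℝ → ℝ :=
  fun z => deriv (fun s => f (s, z.2)) z.1

noncomputable def pdy1 (f : ℝ × ℝ → ℝ) : ℝ × ℝ → ℝ :=
  fun z => deriv (fun s => f (z.1, s)) z.2

section helpers

lemma hasDerivAt_slice_x (f : ℝ × ℝ → ℝ) (hf : Differentiable ℝ f) (z : ℝ × ℝ) :
    HasDerivAt (fun s => f (s, z.2)) (fderiv ℝ f z ((1:ℝ), (0:ℝ))) z.1 := by
  have h1 : HasDerivAt (fun s : ℝ => (s, z.2)) ((1:ℝ), (0:ℝ)) z.1 :=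
    (hasDerivAt_id z.1).prodMk (hasDerivAt_const z.1 z.2)
  have := (hf z).hasFDerivAt.comp_hasDerivAt z.1 h1
  exact this

lemma hasDerivAt_slice_y (f : ℝ × ℝ → ℝ) (hf : Differentiable ℝ f) (z : ℝ × ℝ) :
    HasDerivAt (fun s => f (z.1, s)) (fderiv ℝ f z ((0:ℝ), (1:ℝ))) z.2 := by
  have h1 : HasDerivAt (fun s : ℝ => (z.1, s)) ((0:ℝ), (1:ℝ)) z.2 :=
    (hasDerivAt_const z.2 z.1).prodMk (hasDerivAt_id z.2)
  have := (hf z).hasFDerivAt.comp_hasDerivAt z.2 h1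
  exact this

lemma pdx1_eq (f : ℝ × ℝ → ℝ) (hf : Differentiable ℝ f) :
    pdx1 f = fun z => fderiv ℝ f z ((1:ℝ), (0:ℝ)) := by
  funext z; exact (hasDerivAt_slice_x f hf z).deriv

lemma pdy1_eq (f : ℝ × ℝ → ℝ) (hf : Differentiable ℝ f) :
    pdy1 f = fun z => fderiv ℝ f z ((0:ℝ), (1:ℝ)) := by
  funext z; exact (hasDerivAt_slice_y f hf z).deriv

lemma contDiff_pdx1 {f : ℝ × ℝ → ℝ} (hf : ContDiff ℝ (⊤ : ℕ∞) f) : ContDiff ℝ (⊤ : ℕ∞) (pdx1 f) := by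
  rw [pdx1_eq f (hf.differentiable (by simp))]
  exact (hf.fderiv_right (by simp)).clm_apply contDiff_const

lemma contDiff_pdy1 {f : ℝ × ℝ → ℝ} (hf : ContDiff ℝ (⊤ : ℕ∞) f) : ContDiff ℝ (⊤ : ℕ∞) (pdy1 f) := by
  rw [pdy1_eq f (hf.differentiable (by simp))]
  exact (hf.fderiv_right (by simp)).clm_apply contDiff_const

lemma pd_comm {f : ℝ × ℝ → ℝ} (hf : ContDiff ℝ (⊤ : ℕ∞) f) (z : ℝ × ℝ) :
    pdx1 (pdy1 f) z = pdy1 (pdx1 f) z := by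
  have hd : Differentiable ℝ f := hf.differentiable (by simp)
  have hd1 : Differentiable ℝ (fderiv ℝ f) := (hf.fderiv_right (m := (⊤ : ℕ∞)) (by simp)).differentiable (by simp)
  have h2 : HasFDerivAt (fderiv ℝ f) (fderiv ℝ (fderiv ℝ f) z) z := (hd1 z).hasFDerivAt
  have hsym := second_derivative_symmetric (f := f) (fun y => (hd y).hasFDerivAt) h2
  have e1 : pdx1 (pdy1 f) z = fderiv ℝ (fderiv ℝ f) z (1,0) (0,1) := by
    rw [pdy1_eq f hd]
    have heq : (fun w => fderiv ℝ f w ((0:ℝ),(1:ℝ)))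
        = fun w => (ContinuousLinearMap.apply ℝ ℝ ((0:ℝ),(1:ℝ)) :
            ((ℝ×ℝ) →L[ℝ] ℝ) →L[ℝ] ℝ) (fderiv ℝ f w) := rfl
    rw [pdx1_eq _ (by
      rw [heq]
      exact (ContinuousLinearMap.apply ℝ ℝ ((0:ℝ),(1:ℝ))).differentiable.comp hd1)]
    have hc := ((ContinuousLinearMap.apply ℝ ℝ ((0:ℝ),(1:ℝ))).hasFDerivAt.comp z
      (hd1 z).hasFDerivAt)
    have hfd : fderiv ℝ (fun w => fderiv ℝ f w ((0:ℝ),(1:ℝ))) z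
        = (ContinuousLinearMap.apply ℝ ℝ ((0:ℝ),(1:ℝ))).comp (fderiv ℝ (fderiv ℝ f) z) :=
      hc.fderiv
    show fderiv ℝ (fun w => fderiv ℝ f w ((0:ℝ),(1:ℝ))) z (1,0) = _
    rw [hfd]; simp
  have e2 : pdy1 (pdx1 f) z = fderiv ℝ (fderiv ℝ f) z (0,1) (1,0) := by
    rw [pdx1_eq f hd]
    have heq : (fun w => fderiv ℝ f w ((1:ℝ),(0:ℝ)))
        = fun w => (ContinuousLinearMap.apply ℝ ℝ ((1:ℝ),(0:ℝ)) :
            ((ℝ×ℝ) →L[ℝ] ℝ) →L[ℝ] ℝ) (fderiv ℝ f w) := rfl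
    rw [pdy1_eq _ (by
      rw [heq]
      exact (ContinuousLinearMap.apply ℝ ℝ ((1:ℝ),(0:ℝ))).differentiable.comp hd1)]
    have hc := ((ContinuousLinearMap.apply ℝ ℝ ((1:ℝ),(0:ℝ))).hasFDerivAt.comp z
      (hd1 z).hasFDerivAt)
    have hfd : fderiv ℝ (fun w => fderiv ℝ f w ((1:ℝ),(0:ℝ))) z
        = (ContinuousLinearMap.apply ℝ ℝ ((1:ℝ),(0:ℝ))).comp (fderiv ℝ (fderiv ℝ f) z) :=
      hc.fderiv
    show fderiv ℝ (fun w => fderiv ℝ f w ((1:ℝ),(0:ℝ))) z (0,1) = _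
    rw [hfd]; simp
  rw [e1, e2, hsym]

lemma contDiff_slice_x {f : ℝ × ℝ → ℝ} (hf : ContDiff ℝ (⊤ : ℕ∞) f) (y : ℝ) :
    ContDiff ℝ (⊤ : ℕ∞) (fun s => f (s, y)) :=
  hf.comp (contDiff_id.prodMk contDiff_const)

lemma contDiff_slice_y {f : ℝ × ℝ → ℝ} (hf : ContDiff ℝ (⊤ : ℕ∞) f) (x : ℝ) :
    ContDiff ℝ (⊤ : ℕ∞) (fun t => f (x, t)) :=
  hf.comp (contDiff_const.prodMk contDiff_id)

-- 1D integration by parts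
lemma ibp1d (f h : ℝ → ℝ) (hf : ContDiff ℝ (⊤ : ℕ∞) f) (hh : ContDiff ℝ (⊤ : ℕ∞) h)
    (h0 : deriv f 0 = 0) (h1 : deriv f 1 = 0) :
    ∫ t in (0:ℝ)..1, (f t - deriv (deriv f) t) * h t
      = (∫ t in (0:ℝ)..1, f t * h t) + ∫ t in (0:ℝ)..1, deriv f t * deriv h t := by
  have hf' : ContDiff ℝ ((⊤:ℕ∞):WithTop ℕ∞) f := hf.of_le (by simp)
  have hh' : ContDiff ℝ ((⊤:ℕ∞):WithTop ℕ∞) h := hh.of_le (by simp)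
  have hf1 : ContDiff ℝ ((⊤:ℕ∞):WithTop ℕ∞) (deriv f) := (contDiff_infty_iff_deriv.mp hf').2
  have hf2c : Continuous (deriv (deriv f)) := ((contDiff_infty_iff_deriv.mp hf1).2).continuous
  have hhc : Continuous h := hh'.continuous
  have hh1c : Continuous (deriv h) := ((contDiff_infty_iff_deriv.mp hh').2).continuous
  have hu : ∀ x ∈ Set.uIcc (0:ℝ) 1, HasDerivAt (deriv f) (deriv (deriv f) x) x :=
    fun x _ => ((contDiff_infty_iff_deriv.mp hf1).1 x).hasDerivAt
  have hv : ∀ x ∈ Set.uIcc (0:ℝ) 1, HasDerivAt h (deriv h x) x :=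
    fun x _ => ((contDiff_infty_iff_deriv.mp hh').1 x).hasDerivAt
  have key := integral_deriv_mul_eq_sub hu hv (hf2c.intervalIntegrable _ _)
    (hh1c.intervalIntegrable _ _)
  rw [h0, h1] at key
  have hsplit : (∫ t in (0:ℝ)..1, deriv (deriv f) t * h t + deriv f t * deriv h t)
      = (∫ t in (0:ℝ)..1, deriv (deriv f) t * h t) + ∫ t in (0:ℝ)..1, deriv f t * deriv h t :=
    integral_add ((hf2c.mul hhc).intervalIntegrable _ _)
      ((hf1.continuous.mul hh1c).intervalIntegrable _ _)
  have e2 : (∫ t in (0:ℝ)..1, deriv (deriv f) t * h t)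
      = - ∫ t in (0:ℝ)..1, deriv f t * deriv h t := by
    rw [hsplit] at key; linarith
  have hsub : (∫ t in (0:ℝ)..1, (f t - deriv (deriv f) t) * h t)
      = (∫ t in (0:ℝ)..1, f t * h t) - ∫ t in (0:ℝ)..1, deriv (deriv f) t * h t := by
    rw [← integral_sub (f := fun t => f t * h t) (g := fun t => deriv (deriv f) t * h t) ((hf'.continuous.mul hhc).intervalIntegrable _ _)
      ((hf2c.mul hhc).intervalIntegrable _ _)]
    congr 1; funext t; ring
  rw [hsub, e2]; ring

lemma ibp1d' (f h : ℝ → ℝ) (hf : ContDiff ℝ (⊤ : ℕ∞) f) (hh : ContDiff ℝ (⊤ : ℕ∞) h)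
    (h0 : deriv f 0 = 0) (h1 : deriv f 1 = 0) :
    ∫ t in (0:ℝ)..1,
      ((f t - deriv (deriv f) t) * h t - f t * h t - deriv f t * deriv h t) = 0 := by
  have hf' : ContDiff ℝ ((⊤:ℕ∞):WithTop ℕ∞) f := hf.of_le (by simp)
  have hh' : ContDiff ℝ ((⊤:ℕ∞):WithTop ℕ∞) h := hh.of_le (by simp)
  have hf1 : ContDiff ℝ ((⊤:ℕ∞):WithTop ℕ∞) (deriv f) := (contDiff_infty_iff_deriv.mp hf').2
  have hf2c : Continuous (deriv (deriv f)) := ((contDiff_infty_iff_deriv.mp hf1).2).continuous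
  have hhc : Continuous h := hh'.continuous
  have hh1c : Continuous (deriv h) := ((contDiff_infty_iff_deriv.mp hh').2).continuous
  have i1 : IntervalIntegrable (fun t => (f t - deriv (deriv f) t) * h t) volume 0 1 :=
    (((hf'.continuous.sub hf2c).mul hhc)).intervalIntegrable _ _
  have i2 : IntervalIntegrable (fun t => f t * h t) volume 0 1 :=
    ((hf'.continuous.mul hhc)).intervalIntegrable _ _
  have i3 : IntervalIntegrable (fun t => deriv f t * deriv h t) volume 0 1 :=
    ((hf1.continuous.mul hh1c)).intervalIntegrable _ _
  rw [integral_sub (i1.sub i2) i3, integral_sub i1 i2, ibp1d f h hf hh h0 h1]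
  ring

-- Fubini plumbing
lemma intOnQ (F : ℝ×ℝ → ℝ) (hF : Continuous F) :
    IntegrableOn F (Set.Icc (0:ℝ) 1 ×ˢ Set.Icc (0:ℝ) 1) volume :=
  hF.continuousOn.integrableOn_compact (isCompact_Icc.prod isCompact_Icc)

lemma icc_to_ii (f : ℝ → ℝ) : (∫ x in Set.Icc (0:ℝ) 1, f x) = ∫ x in (0:ℝ)..1, f x := by
  rw [integral_of_le (by norm_num : (0:ℝ) ≤ 1), integral_Icc_eq_integral_Ioc]

lemma fub1 (F : ℝ×ℝ → ℝ) (hF : Continuous F) :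
    (∫ z in Set.Icc (0:ℝ) 1 ×ˢ Set.Icc (0:ℝ) 1, F z)
      = ∫ x in (0:ℝ)..1, ∫ y in (0:ℝ)..1, F (x, y) := by
  have h1 : (volume : Measure (ℝ×ℝ)).restrict (Set.Icc (0:ℝ) 1 ×ˢ Set.Icc (0:ℝ) 1)
      = ((volume : Measure ℝ).restrict (Set.Icc 0 1)).prod
        ((volume : Measure ℝ).restrict (Set.Icc 0 1)) := by
    rw [Measure.volume_eq_prod, Measure.prod_restrict]
  have hInt : Integrable F (((volume : Measure ℝ).restrict (Set.Icc 0 1)).prod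
      ((volume : Measure ℝ).restrict (Set.Icc 0 1))) := by
    rw [Measure.prod_restrict, ← Measure.volume_eq_prod]; exact intOnQ F hF
  calc (∫ z in Set.Icc (0:ℝ) 1 ×ˢ Set.Icc (0:ℝ) 1, F z)
      = ∫ z, F z ∂(((volume : Measure ℝ).restrict (Set.Icc 0 1)).prod
        ((volume : Measure ℝ).restrict (Set.Icc 0 1))) := by rw [← h1]
    _ = ∫ x in Set.Icc (0:ℝ) 1, ∫ y in Set.Icc (0:ℝ) 1, F (x, y) := integral_prod F hInt
    _ = ∫ x in (0:ℝ)..1, ∫ y in (0:ℝ)..1, F (x, y) := by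
        rw [← icc_to_ii]
        refine setIntegral_congr_fun measurableSet_Icc (fun x _ => ?_)
        exact icc_to_ii _

lemma fub2 (F : ℝ×ℝ → ℝ) (hF : Continuous F) :
    (∫ z in Set.Icc (0:ℝ) 1 ×ˢ Set.Icc (0:ℝ) 1, F z)
      = ∫ y in (0:ℝ)..1, ∫ x in (0:ℝ)..1, F (x, y) := by
  have hInt : Integrable F (((volume : Measure ℝ).restrict (Set.Icc 0 1)).prod
      ((volume : Measure ℝ).restrict (Set.Icc 0 1))) := by
    rw [Measure.prod_restrict, ← Measure.volume_eq_prod]; exact intOnQ F hF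
  have hswap := integral_integral_swap (f := fun x y => F (x, y))
    (μ := (volume : Measure ℝ).restrict (Set.Icc 0 1))
    (ν := (volume : Measure ℝ).restrict (Set.Icc 0 1)) hInt
  rw [fub1 F hF]
  rw [show (∫ x in (0:ℝ)..1, ∫ y in (0:ℝ)..1, F (x, y))
      = ∫ x in Set.Icc (0:ℝ) 1, ∫ y in Set.Icc (0:ℝ) 1, F (x, y) by
    rw [← icc_to_ii]
    exact setIntegral_congr_fun measurableSet_Icc fun x _ => (icc_to_ii _).symm]
  rw [hswap, ← icc_to_ii]
  exact setIntegral_congr_fun measurableSet_Icc fun y _ => icc_to_ii _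

-- integration by parts in the x variable on the square
lemma ibp_x (g q : ℝ×ℝ → ℝ) (hg : ContDiff ℝ (⊤ : ℕ∞) g) (hq : ContDiff ℝ (⊤ : ℕ∞) q)
    (hbc : ∀ y ∈ Set.Icc (0:ℝ) 1, pdx1 g (0, y) = 0 ∧ pdx1 g (1, y) = 0) :
    (∫ z in Set.Icc (0:ℝ) 1 ×ˢ Set.Icc (0:ℝ) 1, (g z - pdx1 (pdx1 g) z) * q z)
      = (∫ z in Set.Icc (0:ℝ) 1 ×ˢ Set.Icc (0:ℝ) 1, g z * q z)
        + ∫ z in Set.Icc (0:ℝ) 1 ×ˢ Set.Icc (0:ℝ) 1, pdx1 g z * pdx1 q z := by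
  have cg := hg.continuous
  have cq := hq.continuous
  have cgx := (contDiff_pdx1 hg).continuous
  have cgxx := (contDiff_pdx1 (contDiff_pdx1 hg)).continuous
  have cqx := (contDiff_pdx1 hq).continuous
  have key : (∫ z in Set.Icc (0:ℝ) 1 ×ˢ Set.Icc (0:ℝ) 1,
      ((g z - pdx1 (pdx1 g) z) * q z - g z * q z - pdx1 g z * pdx1 q z)) = 0 := by
    rw [fub2 (fun z => (g z - pdx1 (pdx1 g) z) * q z - g z * q z - pdx1 g z * pdx1 q z) ((((cg.sub cgxx).mul cq).sub (cg.mul cq)).sub (cgx.mul cqx))]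
    have hEq : Set.EqOn
        (fun y => ∫ x in (0:ℝ)..1,
          ((g (x,y) - pdx1 (pdx1 g) (x,y)) * q (x,y) - g (x,y) * q (x,y)
            - pdx1 g (x,y) * pdx1 q (x,y)))
        (fun _ => (0:ℝ)) (Set.uIcc (0:ℝ) 1) := by
      intro y hy
      rw [Set.uIcc_of_le (by norm_num : (0:ℝ) ≤ 1)] at hy
      exact ibp1d' (fun s => g (s, y)) (fun s => q (s, y))
        (contDiff_slice_x hg y) (contDiff_slice_x hq y) (hbc y hy).1 (hbc y hy).2
    rw [integral_congr hEq]
    simp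
  have iA := intOnQ _ ((cg.sub cgxx).mul cq)
  have iB := intOnQ _ (cg.mul cq)
  have iC := intOnQ _ (cgx.mul cqx)
  have iAB : IntegrableOn
      (fun z => (g z - pdx1 (pdx1 g) z) * q z - g z * q z)
      (Set.Icc (0:ℝ) 1 ×ˢ Set.Icc (0:ℝ) 1) volume := iA.sub iB
  rw [integral_sub (g := fun z => pdx1 g z * pdx1 q z) iAB iC, integral_sub (f := fun z => (g z - pdx1 (pdx1 g) z) * q z) (g := fun z => g z * q z) iA iB] at key
  linarith

-- integration by parts in the y variable on the square
lemma ibp_y (p q : ℝ×ℝ → ℝ) (hp : ContDiff ℝ (⊤ : ℕ∞) p) (hq : ContDiff ℝ (⊤ : ℕ∞) q)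
    (hbc : ∀ x ∈ Set.Icc (0:ℝ) 1, pdy1 p (x, 0) = 0 ∧ pdy1 p (x, 1) = 0) :
    (∫ z in Set.Icc (0:ℝ) 1 ×ˢ Set.Icc (0:ℝ) 1, (p z - pdy1 (pdy1 p) z) * q z)
      = (∫ z in Set.Icc (0:ℝ) 1 ×ˢ Set.Icc (0:ℝ) 1, p z * q z)
        + ∫ z in Set.Icc (0:ℝ) 1 ×ˢ Set.Icc (0:ℝ) 1, pdy1 p z * pdy1 q z := by
  have cp := hp.continuous
  have cq := hq.continuous
  have cpy := (contDiff_pdy1 hp).continuous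
  have cpyy := (contDiff_pdy1 (contDiff_pdy1 hp)).continuous
  have cqy := (contDiff_pdy1 hq).continuous
  have key : (∫ z in Set.Icc (0:ℝ) 1 ×ˢ Set.Icc (0:ℝ) 1,
      ((p z - pdy1 (pdy1 p) z) * q z - p z * q z - pdy1 p z * pdy1 q z)) = 0 := by
    rw [fub1 (fun z => (p z - pdy1 (pdy1 p) z) * q z - p z * q z - pdy1 p z * pdy1 q z) ((((cp.sub cpyy).mul cq).sub (cp.mul cq)).sub (cpy.mul cqy))]
    have hEq : Set.EqOn
        (fun x => ∫ t in (0:ℝ)..1,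
          ((p (x,t) - pdy1 (pdy1 p) (x,t)) * q (x,t) - p (x,t) * q (x,t)
            - pdy1 p (x,t) * pdy1 q (x,t)))
        (fun _ => (0:ℝ)) (Set.uIcc (0:ℝ) 1) := by
      intro x hx
      rw [Set.uIcc_of_le (by norm_num : (0:ℝ) ≤ 1)] at hx
      exact ibp1d' (fun t => p (x, t)) (fun t => q (x, t))
        (contDiff_slice_y hp x) (contDiff_slice_y hq x) (hbc x hx).1 (hbc x hx).2
    rw [integral_congr hEq]
    simp
  have iA := intOnQ _ ((cp.sub cpyy).mul cq)
  have iB := intOnQ _ (cp.mul cq)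
  have iC := intOnQ _ (cpy.mul cqy)
  have iAB : IntegrableOn
      (fun z => (p z - pdy1 (pdy1 p) z) * q z - p z * q z)
      (Set.Icc (0:ℝ) 1 ×ˢ Set.Icc (0:ℝ) 1) volume := iA.sub iB
  rw [integral_sub (g := fun z => pdy1 p z * pdy1 q z) iAB iC, integral_sub (f := fun z => (p z - pdy1 (pdy1 p) z) * q z) (g := fun z => p z * q z) iA iB] at key
  linarith

end helpers

/-- For smooth `p, q` on the unit square with `∂_y p = 0` at `y = 0,1` and
`∂_x(1−∂_{yy})p = 0` at `x = 0,1`, the operator `A = (1−∂_{xx})(1−∂_{yy})` satisfies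
`⟨Ap, q⟩ = ⟨p,q⟩ + ⟨∂_x p, ∂_x q⟩ + ⟨∂_y p, ∂_y q⟩ + ⟨∂_{xy}p, ∂_{xy}q⟩`; in particular
`⟨Ap, p⟩ = ‖p‖² + ‖∇p‖² + ‖∂_{xy}p‖² ≥ ‖∇p‖²`. -/
theorem stmt1 (p q : ℝ × ℝ → ℝ) (hp : ContDiff ℝ (⊤ : ℕ∞) p) (hq : ContDiff ℝ (⊤ : ℕ∞) q)
    (hbcy : ∀ x ∈ Set.Icc (0 : ℝ) 1, pdy1 p (x, 0) = 0 ∧ pdy1 p (x, 1) = 0)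
    (hbcx : ∀ y ∈ Set.Icc (0 : ℝ) 1,
      pdx1 (fun w => p w - pdy1 (pdy1 p) w) (0, y) = 0 ∧
      pdx1 (fun w => p w - pdy1 (pdy1 p) w) (1, y) = 0) :
    let Q : Set (ℝ × ℝ) := Set.Icc (0 : ℝ) 1 ×ˢ Set.Icc (0 : ℝ) 1
    let g : ℝ × ℝ → ℝ := fun w => p w - pdy1 (pdy1 p) w
    let Ap : ℝ × ℝ → ℝ := fun w => g w - pdx1 (pdx1 g) w
    ((∫ z in Q, Ap z * q z)
        = (∫ z in Q, p z * q z) + (∫ z in Q, pdx1 p z * pdx1 q z)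
          + (∫ z in Q, pdy1 p z * pdy1 q z)
          + (∫ z in Q, pdx1 (pdy1 p) z * pdx1 (pdy1 q) z)) ∧
    ((∫ z in Q, Ap z * p z)
        = (∫ z in Q, (p z) ^ 2) + (∫ z in Q, (pdx1 p z) ^ 2 + (pdy1 p z) ^ 2)
          + (∫ z in Q, (pdx1 (pdy1 p) z) ^ 2)) ∧
    (∫ z in Q, (pdx1 p z) ^ 2 + (pdy1 p z) ^ 2) ≤ ∫ z in Q, Ap z * p z := by
  intro Q g Ap
  -- abbreviations
  have hpyy : ContDiff ℝ (⊤ : ℕ∞) (pdy1 (pdy1 p)) := contDiff_pdy1 (contDiff_pdy1 hp)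
  have hg : ContDiff ℝ (⊤ : ℕ∞) g := hp.sub hpyy
  have hpx : ContDiff ℝ (⊤ : ℕ∞) (pdx1 p) := contDiff_pdx1 hp
  -- mixed boundary condition : pdy1 (pdx1 p) vanishes at y = 0, 1
  have mixedBC : ∀ x ∈ Set.Icc (0:ℝ) 1,
      pdy1 (pdx1 p) (x, 0) = 0 ∧ pdy1 (pdx1 p) (x, 1) = 0 := by
    have hcont : ∀ c : ℝ, Continuous (fun x : ℝ => pdx1 (pdy1 p) (x, c)) := fun c =>
      (contDiff_pdx1 (contDiff_pdy1 hp)).continuous.comp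
        (continuous_id.prodMk continuous_const)
    have interior0 : ∀ c, (c = 0 ∨ c = 1) → ∀ x ∈ Set.Ioo (0:ℝ) 1,
        pdx1 (pdy1 p) (x, c) = 0 := by
      intro c hc x hx
      have hev : (fun s => pdy1 p (s, c)) =ᶠ[nhds x] (fun _ => (0:ℝ)) := by
        filter_upwards [Ioo_mem_nhds hx.1 hx.2] with s hs
        rcases hc with rfl | rfl
        · exact (hbcy s ⟨le_of_lt hs.1, le_of_lt hs.2⟩).1
        · exact (hbcy s ⟨le_of_lt hs.1, le_of_lt hs.2⟩).2
      show deriv (fun s => pdy1 p (s, c)) x = 0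
      rw [hev.deriv_eq]
      simp
    have closure0 : ∀ c, (c = 0 ∨ c = 1) → ∀ x ∈ Set.Icc (0:ℝ) 1,
        pdx1 (pdy1 p) (x, c) = 0 := by
      intro c hc x hx
      have hEq : Set.EqOn (fun x : ℝ => pdx1 (pdy1 p) (x, c)) (fun _ => (0:ℝ))
          (closure (Set.Ioo (0:ℝ) 1)) :=
        (Set.EqOn.closure (fun s hs => interior0 c hc s hs) (hcont c) continuous_const)
      have := hEq (by rw [closure_Ioo (by norm_num : (0:ℝ) ≠ 1)]; exact hx)
      exact this
    intro x hx
    constructor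
    · rw [← pd_comm hp (x, 0)]; exact closure0 0 (Or.inl rfl) x hx
    · rw [← pd_comm hp (x, 1)]; exact closure0 1 (Or.inr rfl) x hx
  -- key pointwise identity for pdx1 g
  have hgx : ∀ z, pdx1 g z = pdx1 p z - pdy1 (pdy1 (pdx1 p)) z := by
    intro z
    have hdp : DifferentiableAt ℝ (fun s => p (s, z.2)) z.1 :=
      ((contDiff_slice_x hp z.2).differentiable (by simp)) z.1
    have hdpyy : DifferentiableAt ℝ (fun s => pdy1 (pdy1 p) (s, z.2)) z.1 :=
      ((contDiff_slice_x hpyy z.2).differentiable (by simp)) z.1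
    have e1 : pdx1 g z = pdx1 p z - pdx1 (pdy1 (pdy1 p)) z := by
      show deriv (fun s => p (s, z.2) - pdy1 (pdy1 p) (s, z.2)) z.1 = _
      rw [deriv_fun_sub hdp hdpyy]; rfl
    rw [e1]
    congr 1
    calc pdx1 (pdy1 (pdy1 p)) z = pdy1 (pdx1 (pdy1 p)) z := pd_comm (contDiff_pdy1 hp) z
      _ = pdy1 (pdy1 (pdx1 p)) z := by
          congr 1
          funext w
          exact pd_comm hp w
  -- the fundamental identity, for an arbitrary smooth test function
  have main : ∀ r : ℝ × ℝ → ℝ, ContDiff ℝ (⊤ : ℕ∞) r →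
      (∫ z in Q, Ap z * r z)
        = (∫ z in Q, p z * r z) + (∫ z in Q, pdx1 p z * pdx1 r z)
          + (∫ z in Q, pdy1 p z * pdy1 r z)
          + (∫ z in Q, pdx1 (pdy1 p) z * pdx1 (pdy1 r) z) := by
    intro r hr
    have hrx : ContDiff ℝ (⊤ : ℕ∞) (pdx1 r) := contDiff_pdx1 hr
    have step1 := ibp_x g r hg hr hbcx
    have step2 := ibp_y p r hp hr hbcy
    have step3 := ibp_y (pdx1 p) (pdx1 r) hpx hrx mixedBC
    have e3 : (∫ z in Q, pdx1 g z * pdx1 r z)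
        = ∫ z in Q, (pdx1 p z - pdy1 (pdy1 (pdx1 p)) z) * pdx1 r z := by
      refine setIntegral_congr_fun (measurableSet_Icc.prod measurableSet_Icc) fun z _ => ?_
      rw [hgx z]
    have e4 : (∫ z in Q, pdy1 (pdx1 p) z * pdy1 (pdx1 r) z)
        = ∫ z in Q, pdx1 (pdy1 p) z * pdx1 (pdy1 r) z := by
      refine setIntegral_congr_fun (measurableSet_Icc.prod measurableSet_Icc) fun z _ => ?_
      rw [pd_comm hp z, pd_comm hr z]
    calc (∫ z in Q, Ap z * r z)
        = (∫ z in Q, g z * r z) + ∫ z in Q, pdx1 g z * pdx1 r z := step1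
      _ = ((∫ z in Q, p z * r z) + ∫ z in Q, pdy1 p z * pdy1 r z)
          + ∫ z in Q, (pdx1 p z - pdy1 (pdy1 (pdx1 p)) z) * pdx1 r z := by rw [step2, e3]
      _ = ((∫ z in Q, p z * r z) + ∫ z in Q, pdy1 p z * pdy1 r z)
          + ((∫ z in Q, pdx1 p z * pdx1 r z)
            + ∫ z in Q, pdy1 (pdx1 p) z * pdy1 (pdx1 r) z) := by rw [step3]
      _ = _ := by rw [e4]; ring
  have part1 := main q hq
  have part2core := main p hp
  -- rewrite squares
  have sq1 : (∫ z in Q, p z * p z) = ∫ z in Q, (p z) ^ 2 := by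
    refine setIntegral_congr_fun (measurableSet_Icc.prod measurableSet_Icc) fun z _ => ?_
    ring
  have sq2 : (∫ z in Q, pdx1 (pdy1 p) z * pdx1 (pdy1 p) z)
      = ∫ z in Q, (pdx1 (pdy1 p) z) ^ 2 := by
    refine setIntegral_congr_fun (measurableSet_Icc.prod measurableSet_Icc) fun z _ => ?_
    ring
  have cpx := (contDiff_pdx1 hp).continuous
  have cpy := (contDiff_pdy1 hp).continuous
  have sq3 : (∫ z in Q, pdx1 p z * pdx1 p z) + (∫ z in Q, pdy1 p z * pdy1 p z)
      = ∫ z in Q, ((pdx1 p z) ^ 2 + (pdy1 p z) ^ 2) := by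
    rw [integral_add (intOnQ _ ((cpx.pow 2).congr (by intro z; rfl)))
      (intOnQ _ ((cpy.pow 2).congr (by intro z; rfl)))]
    · congr 1
      · refine setIntegral_congr_fun (measurableSet_Icc.prod measurableSet_Icc)
          fun z _ => by ring
      · refine setIntegral_congr_fun (measurableSet_Icc.prod measurableSet_Icc)
          fun z _ => by ring
  have part2 : (∫ z in Q, Ap z * p z)
      = (∫ z in Q, (p z) ^ 2) + (∫ z in Q, (pdx1 p z) ^ 2 + (pdy1 p z) ^ 2)
        + (∫ z in Q, (pdx1 (pdy1 p) z) ^ 2) := by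
    rw [part2core, ← sq1, ← sq2, ← sq3]
    ring
  refine ⟨part1, part2, ?_⟩
  rw [part2]
  have n1 : (0:ℝ) ≤ ∫ z in Q, (p z) ^ 2 := integral_nonneg fun z => sq_nonneg _
  have n2 : (0:ℝ) ≤ ∫ z in Q, (pdx1 (pdy1 p) z) ^ 2 := integral_nonneg fun z => sq_nonneg _
  linarith
end

section
/- For smooth p on the unit cube Ω = (0,1)³ satisfying the boundary conditions ∂_z p = 0 on {z=0,1}, ∂_y(1−∂_{zz})p = 0 on {y=0,1}, and ∂_x(1−∂_{yy})(1−∂_{zz})p = 0 on {x=0,1}, the operator A = (1−∂_{xx})(1−∂_{yy})(1−∂_{zz}) satisfies ⟨Ap, p⟩ = ‖p‖²_{L²} + ‖∇p‖²_{L²} + ‖∂_{xy}p‖² + ‖∂_{yz}p‖² + ‖∂_{zx}p‖² + ‖∂_{xyz}p‖² ≥ ‖∇p‖²_{L²}. -/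
open MeasureTheory
open scoped ContDiff

noncomputable def pdx2 (f : ℝ × ℝ × ℝ → ℝ) : ℝ × ℝ × ℝ → ℝ :=
  fun z => deriv (fun s => f (s, z.2.1, z.2.2)) z.1

noncomputable def pdy2 (f : ℝ × ℝ × ℝ → ℝ) : ℝ × ℝ × ℝ → ℝ :=
  fun z => deriv (fun s => f (z.1, s, z.2.2)) z.2.1

noncomputable def pdz2 (f : ℝ × ℝ × ℝ → ℝ) : ℝ × ℝ × ℝ → ℝ :=
  fun z => deriv (fun s => f (z.1, z.2.1, s)) z.2.2

lemma infty_le_aux : (∞ : WithTop ℕ∞) ≠ 0 := by simp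

lemma hasDerivAt_slice1 (f : ℝ × ℝ × ℝ → ℝ) (a b c : ℝ)
    (hd : DifferentiableAt ℝ f (a, b, c)) :
    HasDerivAt (fun s => f (s, b, c)) (fderiv ℝ f (a, b, c) (1, 0, 0)) a := by
  have h1 : HasDerivAt (fun s : ℝ => (s, b, c)) ((1:ℝ), (0:ℝ), (0:ℝ)) a :=
    (hasDerivAt_id a).prodMk ((hasDerivAt_const a b).prodMk (hasDerivAt_const a c))
  exact hd.hasFDerivAt.comp_hasDerivAt a h1

lemma hasDerivAt_slice2 (f : ℝ × ℝ × ℝ → ℝ) (a b c : ℝ)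
    (hd : DifferentiableAt ℝ f (a, b, c)) :
    HasDerivAt (fun s => f (a, s, c)) (fderiv ℝ f (a, b, c) (0, 1, 0)) b := by
  have h1 : HasDerivAt (fun s : ℝ => (a, s, c)) ((0:ℝ), (1:ℝ), (0:ℝ)) b :=
    (hasDerivAt_const b a).prodMk ((hasDerivAt_id b).prodMk (hasDerivAt_const b c))
  exact hd.hasFDerivAt.comp_hasDerivAt b h1

lemma hasDerivAt_slice3 (f : ℝ × ℝ × ℝ → ℝ) (a b c : ℝ)
    (hd : DifferentiableAt ℝ f (a, b, c)) :
    HasDerivAt (fun s => f (a, b, s)) (fderiv ℝ f (a, b, c) (0, 0, 1)) c := by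
  have h1 : HasDerivAt (fun s : ℝ => (a, b, s)) ((0:ℝ), (0:ℝ), (1:ℝ)) c :=
    (hasDerivAt_const c a).prodMk ((hasDerivAt_const c b).prodMk (hasDerivAt_id c))
  exact hd.hasFDerivAt.comp_hasDerivAt c h1

lemma pdx2_eq (f : ℝ × ℝ × ℝ → ℝ) (w : ℝ × ℝ × ℝ) (hd : DifferentiableAt ℝ f w) :
    pdx2 f w = fderiv ℝ f w (1, 0, 0) := by
  obtain ⟨a, b, c⟩ := w
  exact (hasDerivAt_slice1 f a b c hd).deriv

lemma pdy2_eq (f : ℝ × ℝ × ℝ → ℝ) (w : ℝ × ℝ × ℝ) (hd : DifferentiableAt ℝ f w) :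
    pdy2 f w = fderiv ℝ f w (0, 1, 0) := by
  obtain ⟨a, b, c⟩ := w
  exact (hasDerivAt_slice2 f a b c hd).deriv

lemma pdz2_eq (f : ℝ × ℝ × ℝ → ℝ) (w : ℝ × ℝ × ℝ) (hd : DifferentiableAt ℝ f w) :
    pdz2 f w = fderiv ℝ f w (0, 0, 1) := by
  obtain ⟨a, b, c⟩ := w
  exact (hasDerivAt_slice3 f a b c hd).deriv

lemma contDiff_pdx2 {f : ℝ × ℝ × ℝ → ℝ} (hf : ContDiff ℝ ∞ f) : ContDiff ℝ ∞ (pdx2 f) := by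
  have : pdx2 f = fun w => fderiv ℝ f w (1, 0, 0) :=
    funext fun w => pdx2_eq f w ((hf.differentiable infty_le_aux) w)
  rw [this]
  exact (hf.fderiv_right le_rfl).clm_apply contDiff_const

lemma contDiff_pdy2 {f : ℝ × ℝ × ℝ → ℝ} (hf : ContDiff ℝ ∞ f) : ContDiff ℝ ∞ (pdy2 f) := by
  have : pdy2 f = fun w => fderiv ℝ f w (0, 1, 0) :=
    funext fun w => pdy2_eq f w ((hf.differentiable infty_le_aux) w)
  rw [this]
  exact (hf.fderiv_right le_rfl).clm_apply contDiff_const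

lemma contDiff_pdz2 {f : ℝ × ℝ × ℝ → ℝ} (hf : ContDiff ℝ ∞ f) : ContDiff ℝ ∞ (pdz2 f) := by
  have : pdz2 f = fun w => fderiv ℝ f w (0, 0, 1) :=
    funext fun w => pdz2_eq f w ((hf.differentiable infty_le_aux) w)
  rw [this]
  exact (hf.fderiv_right le_rfl).clm_apply contDiff_const

lemma fderiv2_comm {f : ℝ × ℝ × ℝ → ℝ} (hf : ContDiff ℝ ∞ f) (w u v : ℝ × ℝ × ℝ) :
    fderiv ℝ (fun y => fderiv ℝ f y u) w v = fderiv ℝ (fun y => fderiv ℝ f y v) w u := by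
  have hdf : Differentiable ℝ f := hf.differentiable infty_le_aux
  have hd2 : Differentiable ℝ (fderiv ℝ f) :=
    (hf.fderiv_right le_rfl).differentiable infty_le_aux
  have key : ∀ a b : ℝ × ℝ × ℝ,
      fderiv ℝ (fun y => fderiv ℝ f y a) w b = fderiv ℝ (fderiv ℝ f) w b a := by
    intro a b
    have h : HasFDerivAt (fun y => fderiv ℝ f y a)
        ((ContinuousLinearMap.apply ℝ ℝ a).comp (fderiv ℝ (fderiv ℝ f) w)) w :=
      ((ContinuousLinearMap.apply ℝ ℝ a).hasFDerivAt).comp w ((hd2 w).hasFDerivAt)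
    rw [h.fderiv]; rfl
  rw [key, key]
  exact second_derivative_symmetric (fun y => (hdf y).hasFDerivAt) ((hd2 w).hasFDerivAt) v u
lemma comm_xy {f : ℝ × ℝ × ℝ → ℝ} (hf : ContDiff ℝ ∞ f) :
    pdx2 (pdy2 f) = pdy2 (pdx2 f) := by
  have hdy := contDiff_pdy2 hf
  have hdx := contDiff_pdx2 hf
  have hy : pdy2 f = fun y => fderiv ℝ f y (0, 1, 0) :=
    funext fun w => pdy2_eq f w ((hf.differentiable infty_le_aux) w)
  have hx : pdx2 f = fun y => fderiv ℝ f y (1, 0, 0) :=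
    funext fun w => pdx2_eq f w ((hf.differentiable infty_le_aux) w)
  funext w
  calc pdx2 (pdy2 f) w = fderiv ℝ (pdy2 f) w (1, 0, 0) :=
        pdx2_eq _ w ((hdy.differentiable infty_le_aux) w)
    _ = fderiv ℝ (fun y => fderiv ℝ f y (0, 1, 0)) w (1, 0, 0) := by rw [← hy]
    _ = fderiv ℝ (fun y => fderiv ℝ f y (1, 0, 0)) w (0, 1, 0) := fderiv2_comm hf w _ _
    _ = fderiv ℝ (pdx2 f) w (0, 1, 0) := by rw [← hx]
    _ = pdy2 (pdx2 f) w := (pdy2_eq _ w ((hdx.differentiable infty_le_aux) w)).symm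

lemma comm_yz {f : ℝ × ℝ × ℝ → ℝ} (hf : ContDiff ℝ ∞ f) :
    pdy2 (pdz2 f) = pdz2 (pdy2 f) := by
  have hdz := contDiff_pdz2 hf
  have hdy := contDiff_pdy2 hf
  have hz : pdz2 f = fun y => fderiv ℝ f y (0, 0, 1) :=
    funext fun w => pdz2_eq f w ((hf.differentiable infty_le_aux) w)
  have hy : pdy2 f = fun y => fderiv ℝ f y (0, 1, 0) :=
    funext fun w => pdy2_eq f w ((hf.differentiable infty_le_aux) w)
  funext w
  calc pdy2 (pdz2 f) w = fderiv ℝ (pdz2 f) w (0, 1, 0) :=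
        pdy2_eq _ w ((hdz.differentiable infty_le_aux) w)
    _ = fderiv ℝ (fun y => fderiv ℝ f y (0, 0, 1)) w (0, 1, 0) := by rw [← hz]
    _ = fderiv ℝ (fun y => fderiv ℝ f y (0, 1, 0)) w (0, 0, 1) := fderiv2_comm hf w _ _
    _ = fderiv ℝ (pdy2 f) w (0, 0, 1) := by rw [← hy]
    _ = pdz2 (pdy2 f) w := (pdz2_eq _ w ((hdy.differentiable infty_le_aux) w)).symm

lemma comm_xz {f : ℝ × ℝ × ℝ → ℝ} (hf : ContDiff ℝ ∞ f) :
    pdx2 (pdz2 f) = pdz2 (pdx2 f) := by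
  have hdz := contDiff_pdz2 hf
  have hdx := contDiff_pdx2 hf
  have hz : pdz2 f = fun y => fderiv ℝ f y (0, 0, 1) :=
    funext fun w => pdz2_eq f w ((hf.differentiable infty_le_aux) w)
  have hx : pdx2 f = fun y => fderiv ℝ f y (1, 0, 0) :=
    funext fun w => pdx2_eq f w ((hf.differentiable infty_le_aux) w)
  funext w
  calc pdx2 (pdz2 f) w = fderiv ℝ (pdz2 f) w (1, 0, 0) :=
        pdx2_eq _ w ((hdz.differentiable infty_le_aux) w)
    _ = fderiv ℝ (fun y => fderiv ℝ f y (0, 0, 1)) w (1, 0, 0) := by rw [← hz]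
    _ = fderiv ℝ (fun y => fderiv ℝ f y (1, 0, 0)) w (0, 0, 1) := fderiv2_comm hf w _ _
    _ = fderiv ℝ (pdx2 f) w (0, 0, 1) := by rw [← hx]
    _ = pdz2 (pdx2 f) w := (pdz2_eq _ w ((hdx.differentiable infty_le_aux) w)).symm

lemma pdx2_sub {f g : ℝ × ℝ × ℝ → ℝ} (hf : ContDiff ℝ ∞ f) (hg : ContDiff ℝ ∞ g)
    (w : ℝ × ℝ × ℝ) : pdx2 (fun v => f v - g v) w = pdx2 f w - pdx2 g w := by
  obtain ⟨a, b, c⟩ := w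
  exact deriv_fun_sub (hasDerivAt_slice1 f a b c ((hf.differentiable infty_le_aux) _)).differentiableAt
    (hasDerivAt_slice1 g a b c ((hg.differentiable infty_le_aux) _)).differentiableAt

lemma pdy2_sub {f g : ℝ × ℝ × ℝ → ℝ} (hf : ContDiff ℝ ∞ f) (hg : ContDiff ℝ ∞ g)
    (w : ℝ × ℝ × ℝ) : pdy2 (fun v => f v - g v) w = pdy2 f w - pdy2 g w := by
  obtain ⟨a, b, c⟩ := w
  exact deriv_fun_sub (hasDerivAt_slice2 f a b c ((hf.differentiable infty_le_aux) _)).differentiableAt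
    (hasDerivAt_slice2 g a b c ((hg.differentiable infty_le_aux) _)).differentiableAt
lemma contDiff_deriv1 {f : ℝ → ℝ} (hf : ContDiff ℝ ∞ f) : ContDiff ℝ ∞ (deriv f) :=
  (contDiff_infty_iff_deriv.mp hf).2

lemma ibp1 (f g : ℝ → ℝ) (hf : ContDiff ℝ ∞ f) (hg : ContDiff ℝ ∞ g)
    (h0 : deriv f 0 = 0) (h1 : deriv f 1 = 0) :
    ∫ t in Set.Icc (0:ℝ) 1, (f t - deriv (deriv f) t) * g t
      = ∫ t in Set.Icc (0:ℝ) 1, (f t * g t + deriv f t * deriv g t) := by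
  have hf' : ContDiff ℝ ∞ (deriv f) := contDiff_deriv1 hf
  have hf'' : Continuous (deriv (deriv f)) := (contDiff_deriv1 hf').continuous
  have hg' : Continuous (deriv g) := (contDiff_deriv1 hg).continuous
  have hfc : Continuous f := hf.continuous
  have hgc : Continuous g := hg.continuous
  have hf'c : Continuous (deriv f) := hf'.continuous
  rw [integral_Icc_eq_integral_Ioc, integral_Icc_eq_integral_Ioc,
    ← intervalIntegral.integral_of_le (zero_le_one (α := ℝ)),
    ← intervalIntegral.integral_of_le (zero_le_one (α := ℝ))]
  have key := intervalIntegral.integral_deriv_mul_eq_sub (a := (0:ℝ)) (b := 1)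
    (u := deriv f) (v := g) (u' := deriv (deriv f)) (v' := deriv g)
    (fun x _ => ((hf'.differentiable infty_le_aux) x).hasDerivAt)
    (fun x _ => ((hg.differentiable infty_le_aux) x).hasDerivAt)
    (hf''.intervalIntegrable 0 1) (hg'.intervalIntegrable 0 1)
  rw [h0, h1, zero_mul, zero_mul, sub_zero] at key
  have i1 : IntervalIntegrable (fun t => f t * g t) volume 0 1 :=
    (hfc.mul hgc).intervalIntegrable 0 1
  have i2 : IntervalIntegrable (fun t => deriv (deriv f) t * g t) volume 0 1 :=
    (hf''.mul hgc).intervalIntegrable 0 1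
  have i3 : IntervalIntegrable (fun t => deriv f t * deriv g t) volume 0 1 :=
    (hf'c.mul hg').intervalIntegrable 0 1
  rw [intervalIntegral.integral_add i2 i3] at key
  have e1 : ∫ t in (0:ℝ)..1, (f t - deriv (deriv f) t) * g t
      = (∫ t in (0:ℝ)..1, f t * g t) - ∫ t in (0:ℝ)..1, deriv (deriv f) t * g t := by
    rw [← intervalIntegral.integral_sub i1 i2]
    congr 1; funext t; ring
  have e2 : ∫ t in (0:ℝ)..1, (f t * g t + deriv f t * deriv g t)
      = (∫ t in (0:ℝ)..1, f t * g t) + ∫ t in (0:ℝ)..1, deriv f t * deriv g t :=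
    intervalIntegral.integral_add i1 i3
  rw [e1, e2]
  linarith
lemma compactQ : IsCompact (Set.Icc (0:ℝ) 1 ×ˢ (Set.Icc (0:ℝ) 1 ×ˢ Set.Icc (0:ℝ) 1)) :=
  isCompact_Icc.prod (isCompact_Icc.prod isCompact_Icc)

lemma intOnQ_s2 {f : ℝ × ℝ × ℝ → ℝ} (hf : Continuous f) :
    IntegrableOn f (Set.Icc (0:ℝ) 1 ×ˢ (Set.Icc (0:ℝ) 1 ×ˢ Set.Icc (0:ℝ) 1)) :=
  hf.locallyIntegrable.integrableOn_isCompact compactQ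

lemma intOn2 {g : ℝ × ℝ → ℝ} (hg : Continuous g) :
    IntegrableOn g (Set.Icc (0:ℝ) 1 ×ˢ Set.Icc (0:ℝ) 1) :=
  hg.locallyIntegrable.integrableOn_isCompact (isCompact_Icc.prod isCompact_Icc)

lemma expand2 (g : ℝ × ℝ → ℝ) (hg : Continuous g) :
    ∫ w in (Set.Icc (0:ℝ) 1 ×ˢ Set.Icc (0:ℝ) 1), g w
      = ∫ a in Set.Icc (0:ℝ) 1, ∫ b in Set.Icc (0:ℝ) 1, g (a, b) := by
  rw [Measure.volume_eq_prod ℝ _]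
  exact setIntegral_prod g (by rw [← Measure.volume_eq_prod ..]; exact intOn2 hg)

lemma cube_eq (f : ℝ × ℝ × ℝ → ℝ) (hf : Continuous f) :
    ∫ w in (Set.Icc (0:ℝ) 1 ×ˢ (Set.Icc (0:ℝ) 1 ×ˢ Set.Icc (0:ℝ) 1)), f w
      = ∫ x in Set.Icc (0:ℝ) 1, ∫ y in Set.Icc (0:ℝ) 1, ∫ z in Set.Icc (0:ℝ) 1,
          f (x, y, z) := by
  rw [Measure.volume_eq_prod ℝ _]
  rw [setIntegral_prod f (by rw [← Measure.volume_eq_prod ..]; exact intOnQ_s2 hf)]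
  refine setIntegral_congr_fun measurableSet_Icc fun x _ => ?_
  exact expand2 (fun w2 => f (x, w2)) (hf.comp (continuous_const.prodMk continuous_id))
lemma swap2 (F : ℝ → ℝ → ℝ) (hF : Continuous fun ab : ℝ × ℝ => F ab.1 ab.2) :
    (∫ a in Set.Icc (0:ℝ) 1, ∫ b in Set.Icc (0:ℝ) 1, F a b)
      = ∫ b in Set.Icc (0:ℝ) 1, ∫ a in Set.Icc (0:ℝ) 1, F a b := by
  apply integral_integral_swap
  rw [Measure.prod_restrict]
  exact intOn2 hF

lemma swapX (f : ℝ × ℝ × ℝ → ℝ) (hf : Continuous f) :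
    ∫ w in (Set.Icc (0:ℝ) 1 ×ˢ (Set.Icc (0:ℝ) 1 ×ˢ Set.Icc (0:ℝ) 1)), f w
      = ∫ w2 in (Set.Icc (0:ℝ) 1 ×ˢ Set.Icc (0:ℝ) 1), ∫ x in Set.Icc (0:ℝ) 1,
          f (x, w2) := by
  rw [Measure.volume_eq_prod ℝ _]
  rw [setIntegral_prod f (by rw [← Measure.volume_eq_prod ..]; exact intOnQ_s2 hf)]
  apply integral_integral_swap
  rw [Measure.prod_restrict]
  rw [← Measure.volume_eq_prod ..] at *
  exact intOnQ_s2 hf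

lemma frame_null :
    volume ((Set.Icc (0:ℝ) 1 ×ˢ Set.Icc (0:ℝ) 1 : Set (ℝ × ℝ))
      \ (Set.Ioo (0:ℝ) 1 ×ˢ Set.Ioo (0:ℝ) 1)) = 0 := by
  have hsub : (Set.Icc (0:ℝ) 1 ×ˢ Set.Icc (0:ℝ) 1 : Set (ℝ × ℝ))
      \ (Set.Ioo (0:ℝ) 1 ×ˢ Set.Ioo (0:ℝ) 1)
      ⊆ (({0, 1} : Set ℝ) ×ˢ (Set.univ : Set ℝ))
        ∪ ((Set.univ : Set ℝ) ×ˢ ({0, 1} : Set ℝ)) := by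
    rintro ⟨a, b⟩ ⟨⟨⟨ha0, ha1⟩, hb0, hb1⟩, hnot⟩
    simp only [Set.mem_prod, Set.mem_Ioo, not_and_or, not_and, not_lt] at hnot
    simp only [Set.mem_union, Set.mem_prod, Set.mem_univ, Set.mem_insert_iff,
      Set.mem_singleton_iff, and_true, true_and]
    rcases hnot with (h | h) | (h | h)
    · exact Or.inl (Or.inl (le_antisymm h ha0))
    · exact Or.inl (Or.inr (le_antisymm ha1 h))
    · exact Or.inr (Or.inl (le_antisymm h hb0))
    · exact Or.inr (Or.inr (le_antisymm hb1 h))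
  have hfin : volume ({0, 1} : Set ℝ) = 0 :=
    ((Set.countable_singleton (1:ℝ)).insert 0).measure_zero volume
  refine measure_mono_null hsub (measure_union_null ?_ ?_)
  · rw [Measure.volume_eq_prod ℝ ℝ, Measure.prod_prod, hfin, zero_mul]
  · rw [Measure.volume_eq_prod ℝ ℝ, Measure.prod_prod, hfin, mul_zero]
lemma slice_smooth3 {F : ℝ × ℝ × ℝ → ℝ} (hF : ContDiff ℝ ∞ F) (a b : ℝ) :
    ContDiff ℝ ∞ (fun t => F (a, b, t)) :=
  hF.comp ((contDiff_const.prodMk (contDiff_const.prodMk contDiff_id)))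

lemma slice_smooth2 {F : ℝ × ℝ × ℝ → ℝ} (hF : ContDiff ℝ ∞ F) (a c : ℝ) :
    ContDiff ℝ ∞ (fun t => F (a, t, c)) :=
  hF.comp ((contDiff_const.prodMk (contDiff_id.prodMk contDiff_const)))

lemma slice_smooth1 {F : ℝ × ℝ × ℝ → ℝ} (hF : ContDiff ℝ ∞ F) (b c : ℝ) :
    ContDiff ℝ ∞ (fun t => F (t, b, c)) :=
  hF.comp ((contDiff_id.prodMk (contDiff_const.prodMk contDiff_const)))

lemma stageZ (F q : ℝ × ℝ × ℝ → ℝ) (hF : ContDiff ℝ ∞ F) (hq : ContDiff ℝ ∞ q)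
    (hbc : ∀ x ∈ Set.Ioo (0:ℝ) 1, ∀ y ∈ Set.Ioo (0:ℝ) 1,
      pdz2 F (x, y, 0) = 0 ∧ pdz2 F (x, y, 1) = 0) :
    ∫ w in (Set.Icc (0:ℝ) 1 ×ˢ (Set.Icc (0:ℝ) 1 ×ˢ Set.Icc (0:ℝ) 1)),
        (F w - pdz2 (pdz2 F) w) * q w
      = ∫ w in (Set.Icc (0:ℝ) 1 ×ˢ (Set.Icc (0:ℝ) 1 ×ˢ Set.Icc (0:ℝ) 1)),
          (F w * q w + pdz2 F w * pdz2 q w) := by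
  have cL : Continuous fun w => (F w - pdz2 (pdz2 F) w) * q w :=
    ((hF.continuous).sub (contDiff_pdz2 (contDiff_pdz2 hF)).continuous).mul hq.continuous
  have cR : Continuous fun w => F w * q w + pdz2 F w * pdz2 q w :=
    ((hF.continuous.mul hq.continuous)).add
      ((contDiff_pdz2 hF).continuous.mul (contDiff_pdz2 hq).continuous)
  rw [cube_eq _ cL, cube_eq _ cR, integral_Icc_eq_integral_Ioo, integral_Icc_eq_integral_Ioo]
  refine setIntegral_congr_fun measurableSet_Ioo fun x hx => ?_
  rw [integral_Icc_eq_integral_Ioo, integral_Icc_eq_integral_Ioo]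
  refine setIntegral_congr_fun measurableSet_Ioo fun y hy => ?_
  exact ibp1 (fun t => F (x, y, t)) (fun t => q (x, y, t))
    (slice_smooth3 hF x y) (slice_smooth3 hq x y) (hbc x hx y hy).1 (hbc x hx y hy).2
lemma stageY (F q : ℝ × ℝ × ℝ → ℝ) (hF : ContDiff ℝ ∞ F) (hq : ContDiff ℝ ∞ q)
    (hbc : ∀ x ∈ Set.Ioo (0:ℝ) 1, ∀ z ∈ Set.Ioo (0:ℝ) 1,
      pdy2 F (x, 0, z) = 0 ∧ pdy2 F (x, 1, z) = 0) :
    ∫ w in (Set.Icc (0:ℝ) 1 ×ˢ (Set.Icc (0:ℝ) 1 ×ˢ Set.Icc (0:ℝ) 1)),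
        (F w - pdy2 (pdy2 F) w) * q w
      = ∫ w in (Set.Icc (0:ℝ) 1 ×ˢ (Set.Icc (0:ℝ) 1 ×ˢ Set.Icc (0:ℝ) 1)),
          (F w * q w + pdy2 F w * pdy2 q w) := by
  have cL : Continuous fun w => (F w - pdy2 (pdy2 F) w) * q w :=
    ((hF.continuous).sub (contDiff_pdy2 (contDiff_pdy2 hF)).continuous).mul hq.continuous
  have cR : Continuous fun w => F w * q w + pdy2 F w * pdy2 q w :=
    ((hF.continuous.mul hq.continuous)).add
      ((contDiff_pdy2 hF).continuous.mul (contDiff_pdy2 hq).continuous)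
  rw [cube_eq _ cL, cube_eq _ cR, integral_Icc_eq_integral_Ioo, integral_Icc_eq_integral_Ioo]
  refine setIntegral_congr_fun measurableSet_Ioo fun x hx => ?_
  refine (swap2 (fun y z => (F (x, y, z) - pdy2 (pdy2 F) (x, y, z)) * q (x, y, z))
    (by exact cL.comp (continuous_const.prodMk continuous_id))).trans ?_
  refine Eq.trans ?_ (swap2 (fun y z => F (x, y, z) * q (x, y, z)
      + pdy2 F (x, y, z) * pdy2 q (x, y, z))
    (by exact cR.comp (continuous_const.prodMk continuous_id))).symm
  rw [integral_Icc_eq_integral_Ioo, integral_Icc_eq_integral_Ioo]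
  refine setIntegral_congr_fun measurableSet_Ioo fun z hz => ?_
  exact ibp1 (fun t => F (x, t, z)) (fun t => q (x, t, z))
    (slice_smooth2 hF x z) (slice_smooth2 hq x z) (hbc x hx z hz).1 (hbc x hx z hz).2

lemma stageX (F q : ℝ × ℝ × ℝ → ℝ) (hF : ContDiff ℝ ∞ F) (hq : ContDiff ℝ ∞ q)
    (hbc : ∀ y ∈ Set.Ioo (0:ℝ) 1, ∀ z ∈ Set.Ioo (0:ℝ) 1,
      pdx2 F (0, y, z) = 0 ∧ pdx2 F (1, y, z) = 0) :
    ∫ w in (Set.Icc (0:ℝ) 1 ×ˢ (Set.Icc (0:ℝ) 1 ×ˢ Set.Icc (0:ℝ) 1)),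
        (F w - pdx2 (pdx2 F) w) * q w
      = ∫ w in (Set.Icc (0:ℝ) 1 ×ˢ (Set.Icc (0:ℝ) 1 ×ˢ Set.Icc (0:ℝ) 1)),
          (F w * q w + pdx2 F w * pdx2 q w) := by
  have cL : Continuous fun w => (F w - pdx2 (pdx2 F) w) * q w :=
    ((hF.continuous).sub (contDiff_pdx2 (contDiff_pdx2 hF)).continuous).mul hq.continuous
  have cR : Continuous fun w => F w * q w + pdx2 F w * pdx2 q w :=
    ((hF.continuous.mul hq.continuous)).add
      ((contDiff_pdx2 hF).continuous.mul (contDiff_pdx2 hq).continuous)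
  rw [swapX _ cL, swapX _ cR]
  refine setIntegral_congr_ae (measurableSet_Icc.prod measurableSet_Icc) ?_
  filter_upwards [measure_eq_zero_iff_ae_notMem.mp frame_null] with w2 hw2 hmem
  have hio : w2 ∈ Set.Ioo (0:ℝ) 1 ×ˢ Set.Ioo (0:ℝ) 1 := by
    by_contra h; exact hw2 ⟨hmem, h⟩
  obtain ⟨y, z⟩ := w2
  obtain ⟨hy, hz⟩ := hio
  exact ibp1 (fun t => F (t, y, z)) (fun t => q (t, y, z))
    (slice_smooth1 hF y z) (slice_smooth1 hq y z) (hbc y hy z hz).1 (hbc y hy z hz).2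
lemma derivZero {h : ℝ → ℝ} {x : ℝ} (hx : x ∈ Set.Ioo (0:ℝ) 1)
    (h0 : ∀ s ∈ Set.Icc (0:ℝ) 1, h s = 0) : deriv h x = 0 := by
  have he : h =ᶠ[nhds x] fun _ => 0 := by
    filter_upwards [Ioo_mem_nhds hx.1 hx.2] with s hs
    exact h0 s (Set.Ioo_subset_Icc_self hs)
  rw [he.deriv_eq]
  simp

/-- For smooth `p` on the unit cube with the Neumann-type boundary conditions
`∂_z p|_{z=0,1} = 0`, `∂_y(1−∂_{zz})p|_{y=0,1} = 0`,
`∂_x(1−∂_{yy})(1−∂_{zz})p|_{x=0,1} = 0`, the operator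
`A = (1−∂_{xx})(1−∂_{yy})(1−∂_{zz})` satisfies
`⟨Ap, p⟩ = ‖p‖² + ‖∇p‖² + ‖∂_{xy}p‖² + ‖∂_{yz}p‖² + ‖∂_{zx}p‖² + ‖∂_{xyz}p‖² ≥ ‖∇p‖²`. -/
theorem stmt2 (p : ℝ × ℝ × ℝ → ℝ) (hp : ContDiff ℝ (⊤ : ℕ∞) p)
    (hbcz : ∀ x ∈ Set.Icc (0 : ℝ) 1, ∀ y ∈ Set.Icc (0 : ℝ) 1,
      pdz2 p (x, y, 0) = 0 ∧ pdz2 p (x, y, 1) = 0)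
    (hbcy : ∀ x ∈ Set.Icc (0 : ℝ) 1, ∀ z ∈ Set.Icc (0 : ℝ) 1,
      pdy2 (fun w => p w - pdz2 (pdz2 p) w) (x, 0, z) = 0 ∧
      pdy2 (fun w => p w - pdz2 (pdz2 p) w) (x, 1, z) = 0)
    (hbcx : ∀ y ∈ Set.Icc (0 : ℝ) 1, ∀ z ∈ Set.Icc (0 : ℝ) 1,
      pdx2 (fun w => (p w - pdz2 (pdz2 p) w)
        - pdy2 (pdy2 (fun v => p v - pdz2 (pdz2 p) v)) w) (0, y, z) = 0 ∧
      pdx2 (fun w => (p w - pdz2 (pdz2 p) w)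
        - pdy2 (pdy2 (fun v => p v - pdz2 (pdz2 p) v)) w) (1, y, z) = 0) :
    let Q : Set (ℝ × ℝ × ℝ) :=
      Set.Icc (0 : ℝ) 1 ×ˢ (Set.Icc (0 : ℝ) 1 ×ˢ Set.Icc (0 : ℝ) 1)
    let g1 : ℝ × ℝ × ℝ → ℝ := fun w => p w - pdz2 (pdz2 p) w
    let g2 : ℝ × ℝ × ℝ → ℝ := fun w => g1 w - pdy2 (pdy2 g1) w
    let Ap : ℝ × ℝ × ℝ → ℝ := fun w => g2 w - pdx2 (pdx2 g2) w
    ((∫ z in Q, Ap z * p z)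
        = (∫ z in Q, (p z) ^ 2)
          + (∫ z in Q, (pdx2 p z) ^ 2 + (pdy2 p z) ^ 2 + (pdz2 p z) ^ 2)
          + (∫ z in Q, (pdx2 (pdy2 p) z) ^ 2 + (pdy2 (pdz2 p) z) ^ 2
              + (pdz2 (pdx2 p) z) ^ 2)
          + (∫ z in Q, (pdx2 (pdy2 (pdz2 p)) z) ^ 2)) ∧
    (∫ z in Q, (pdx2 p z) ^ 2 + (pdy2 p z) ^ 2 + (pdz2 p z) ^ 2) ≤ ∫ z in Q, Ap z * p z := by
  intro Q g1 g2 Ap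
  have hp' : ContDiff ℝ ∞ p := hp.of_le (by simp)
  have hpx := contDiff_pdx2 hp'
  have hpy := contDiff_pdy2 hp'
  have hpz := contDiff_pdz2 hp'
  have hpxy : ContDiff ℝ ∞ (pdy2 (pdx2 p)) := contDiff_pdy2 hpx
  have hg1 : ContDiff ℝ ∞ g1 := hp'.sub (contDiff_pdz2 (contDiff_pdz2 hp'))
  have hg2 : ContDiff ℝ ∞ g2 := hg1.sub (contDiff_pdy2 (contDiff_pdy2 hg1))
  have hg1x : ContDiff ℝ ∞ (pdx2 g1) := contDiff_pdx2 hg1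
  have hQmeas : MeasurableSet Q :=
    measurableSet_Icc.prod (measurableSet_Icc.prod measurableSet_Icc)
  -- continuity
  have c0 : Continuous p := hp'.continuous
  have cpx : Continuous (pdx2 p) := hpx.continuous
  have cpy : Continuous (pdy2 p) := hpy.continuous
  have cpz : Continuous (pdz2 p) := hpz.continuous
  have cpxy : Continuous (pdy2 (pdx2 p)) := hpxy.continuous
  have cpzx : Continuous (pdz2 (pdx2 p)) := (contDiff_pdz2 hpx).continuous
  have cpzy : Continuous (pdz2 (pdy2 p)) := (contDiff_pdz2 hpy).continuous
  have cpzyx : Continuous (pdz2 (pdy2 (pdx2 p))) := (contDiff_pdz2 hpxy).continuous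
  have cg1 : Continuous g1 := hg1.continuous
  have cg2 : Continuous g2 := hg2.continuous
  have cg1x : Continuous (pdx2 g1) := hg1x.continuous
  have cg1y : Continuous (pdy2 g1) := (contDiff_pdy2 hg1).continuous
  have cg2x : Continuous (pdx2 g2) := (contDiff_pdx2 hg2).continuous
  have cg1xy : Continuous (pdy2 (pdx2 g1)) := (contDiff_pdy2 hg1x).continuous
  -- boundary conditions
  have bcx : ∀ y ∈ Set.Ioo (0:ℝ) 1, ∀ z ∈ Set.Ioo (0:ℝ) 1,
      pdx2 g2 (0, y, z) = 0 ∧ pdx2 g2 (1, y, z) = 0 :=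
    fun y hy z hz => hbcx y (Set.Ioo_subset_Icc_self hy) z (Set.Ioo_subset_Icc_self hz)
  have bcy : ∀ x ∈ Set.Ioo (0:ℝ) 1, ∀ z ∈ Set.Ioo (0:ℝ) 1,
      pdy2 g1 (x, 0, z) = 0 ∧ pdy2 g1 (x, 1, z) = 0 :=
    fun x hx z hz => hbcy x (Set.Ioo_subset_Icc_self hx) z (Set.Ioo_subset_Icc_self hz)
  have bcz : ∀ x ∈ Set.Ioo (0:ℝ) 1, ∀ y ∈ Set.Ioo (0:ℝ) 1,
      pdz2 p (x, y, 0) = 0 ∧ pdz2 p (x, y, 1) = 0 :=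
    fun x hx y hy => hbcz x (Set.Ioo_subset_Icc_self hx) y (Set.Ioo_subset_Icc_self hy)
  have bczx : ∀ x ∈ Set.Ioo (0:ℝ) 1, ∀ y ∈ Set.Icc (0:ℝ) 1,
      pdz2 (pdx2 p) (x, y, 0) = 0 ∧ pdz2 (pdx2 p) (x, y, 1) = 0 := by
    intro x hx y hy
    have e : pdz2 (pdx2 p) = pdx2 (pdz2 p) := (comm_xz hp').symm
    constructor
    · rw [e]; exact derivZero hx (fun s hs => (hbcz s hs y hy).1)
    · rw [e]; exact derivZero hx (fun s hs => (hbcz s hs y hy).2)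
  have bczy : ∀ x ∈ Set.Ioo (0:ℝ) 1, ∀ y ∈ Set.Ioo (0:ℝ) 1,
      pdz2 (pdy2 p) (x, y, 0) = 0 ∧ pdz2 (pdy2 p) (x, y, 1) = 0 := by
    intro x hx y hy
    have e : pdz2 (pdy2 p) = pdy2 (pdz2 p) := (comm_yz hp').symm
    constructor
    · rw [e]; exact derivZero hy (fun s hs => (hbcz x (Set.Ioo_subset_Icc_self hx) s hs).1)
    · rw [e]; exact derivZero hy (fun s hs => (hbcz x (Set.Ioo_subset_Icc_self hx) s hs).2)
  have bczxy : ∀ x ∈ Set.Ioo (0:ℝ) 1, ∀ y ∈ Set.Ioo (0:ℝ) 1,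
      pdz2 (pdy2 (pdx2 p)) (x, y, 0) = 0 ∧ pdz2 (pdy2 (pdx2 p)) (x, y, 1) = 0 := by
    intro x hx y hy
    have e : pdz2 (pdy2 (pdx2 p)) = pdy2 (pdz2 (pdx2 p)) := (comm_yz hpx).symm
    constructor
    · rw [e]; exact derivZero hy (fun s hs => (bczx x hx s hs).1)
    · rw [e]; exact derivZero hy (fun s hs => (bczx x hx s hs).2)
  have bcyx : ∀ x ∈ Set.Ioo (0:ℝ) 1, ∀ z ∈ Set.Ioo (0:ℝ) 1,
      pdy2 (pdx2 g1) (x, 0, z) = 0 ∧ pdy2 (pdx2 g1) (x, 1, z) = 0 := by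
    intro x hx z hz
    have e : pdy2 (pdx2 g1) = pdx2 (pdy2 g1) := (comm_xy hg1).symm
    constructor
    · rw [e]
      exact derivZero hx (fun s hs => (hbcy s hs z (Set.Ioo_subset_Icc_self hz)).1)
    · rw [e]
      exact derivZero hx (fun s hs => (hbcy s hs z (Set.Ioo_subset_Icc_self hz)).2)
  -- square rewriting helper
  have sqe : ∀ f : ℝ × ℝ × ℝ → ℝ, (∫ w in Q, f w * f w) = ∫ w in Q, (f w) ^ 2 :=
    fun f => integral_congr_ae (Filter.Eventually.of_forall fun w => (pow_two (f w)).symm)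
  -- pointwise rewritings of derivatives of g1, g2
  have hg2x : ∀ w, pdx2 g2 w = pdx2 g1 w - pdy2 (pdy2 (pdx2 g1)) w := by
    intro w
    have h1 : pdx2 g2 w = pdx2 g1 w - pdx2 (fun v => pdy2 (pdy2 g1) v) w :=
      pdx2_sub hg1 (contDiff_pdy2 (contDiff_pdy2 hg1)) w
    have h2 : pdx2 (pdy2 (pdy2 g1)) = pdy2 (pdy2 (pdx2 g1)) := by
      rw [comm_xy (contDiff_pdy2 hg1), comm_xy hg1]
    have h3 : pdx2 (fun v => pdy2 (pdy2 g1) v) w = pdy2 (pdy2 (pdx2 g1)) w := congrFun h2 w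
    rw [h1, h3]
  have hg1y : ∀ w, pdy2 g1 w = pdy2 p w - pdz2 (pdz2 (pdy2 p)) w := by
    intro w
    have h1 : pdy2 g1 w = pdy2 p w - pdy2 (fun v => pdz2 (pdz2 p) v) w :=
      pdy2_sub hp' (contDiff_pdz2 (contDiff_pdz2 hp')) w
    have h2 : pdy2 (pdz2 (pdz2 p)) = pdz2 (pdz2 (pdy2 p)) := by
      rw [comm_yz (contDiff_pdz2 hp'), comm_yz hp']
    have h3 : pdy2 (fun v => pdz2 (pdz2 p) v) w = pdz2 (pdz2 (pdy2 p)) w := congrFun h2 w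
    rw [h1, h3]
  have hg1x' : ∀ w, pdx2 g1 w = pdx2 p w - pdz2 (pdz2 (pdx2 p)) w := by
    intro w
    have h1 : pdx2 g1 w = pdx2 p w - pdx2 (fun v => pdz2 (pdz2 p) v) w :=
      pdx2_sub hp' (contDiff_pdz2 (contDiff_pdz2 hp')) w
    have h2 : pdx2 (pdz2 (pdz2 p)) = pdz2 (pdz2 (pdx2 p)) := by
      rw [comm_xz (contDiff_pdz2 hp'), comm_xz hp']
    have h3 : pdx2 (fun v => pdz2 (pdz2 p) v) w = pdz2 (pdz2 (pdx2 p)) w := congrFun h2 w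
    rw [h1, h3]
  have hg1xy : ∀ w, pdy2 (pdx2 g1) w = pdy2 (pdx2 p) w - pdz2 (pdz2 (pdy2 (pdx2 p))) w := by
    intro w
    have hfx : pdx2 g1 = fun w => pdx2 p w - pdz2 (pdz2 (pdx2 p)) w := funext hg1x'
    rw [hfx]
    have h2 : pdy2 (fun v => pdx2 p v - pdz2 (pdz2 (pdx2 p)) v) w
        = pdy2 (pdx2 p) w - pdy2 (pdz2 (pdz2 (pdx2 p))) w :=
      pdy2_sub hpx (contDiff_pdz2 (contDiff_pdz2 hpx)) w
    rw [h2]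
    have h3 : pdy2 (pdz2 (pdz2 (pdx2 p))) = pdz2 (pdz2 (pdy2 (pdx2 p))) := by
      rw [comm_yz (contDiff_pdz2 hpx), comm_yz hpx]
    rw [congrFun h3 w]
  -- stage 1
  have key1 : (∫ w in Q, Ap w * p w) = ∫ w in Q, (g2 w * p w + pdx2 g2 w * pdx2 p w) :=
    stageX g2 p hg2 hp' bcx
  have add1 : (∫ w in Q, (g2 w * p w + pdx2 g2 w * pdx2 p w))
      = (∫ w in Q, g2 w * p w) + ∫ w in Q, pdx2 g2 w * pdx2 p w :=
    integral_add (intOnQ_s2 (cg2.mul c0)) (intOnQ_s2 (cg2x.mul cpx))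
  -- stage 2
  have step2a : (∫ w in Q, g2 w * p w) = ∫ w in Q, (g1 w * p w + pdy2 g1 w * pdy2 p w) :=
    stageY g1 p hg1 hp' bcy
  have add2 : (∫ w in Q, (g1 w * p w + pdy2 g1 w * pdy2 p w))
      = (∫ w in Q, g1 w * p w) + ∫ w in Q, pdy2 g1 w * pdy2 p w :=
    integral_add (intOnQ_s2 (cg1.mul c0)) (intOnQ_s2 (cg1y.mul cpy))
  have step2b : (∫ w in Q, pdx2 g2 w * pdx2 p w)
      = ∫ w in Q, (pdx2 g1 w * pdx2 p w + pdy2 (pdx2 g1) w * pdy2 (pdx2 p) w) := by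
    have e : (∫ w in Q, pdx2 g2 w * pdx2 p w)
        = ∫ w in Q, (pdx2 g1 w - pdy2 (pdy2 (pdx2 g1)) w) * pdx2 p w :=
      integral_congr_ae (Filter.Eventually.of_forall fun w => by beta_reduce; rw [hg2x w])
    rw [e]
    exact stageY (pdx2 g1) (pdx2 p) hg1x hpx bcyx
  have add3 : (∫ w in Q, (pdx2 g1 w * pdx2 p w + pdy2 (pdx2 g1) w * pdy2 (pdx2 p) w))
      = (∫ w in Q, pdx2 g1 w * pdx2 p w) + ∫ w in Q, pdy2 (pdx2 g1) w * pdy2 (pdx2 p) w :=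
    integral_add (intOnQ_s2 (cg1x.mul cpx)) (intOnQ_s2 (cg1xy.mul cpxy))
  -- stage 3
  have step3a : (∫ w in Q, g1 w * p w)
      = (∫ w in Q, (p w) ^ 2) + ∫ w in Q, (pdz2 p w) ^ 2 := by
    calc (∫ w in Q, g1 w * p w) = ∫ w in Q, (p w * p w + pdz2 p w * pdz2 p w) :=
          stageZ p p hp' hp' bcz
      _ = (∫ w in Q, p w * p w) + ∫ w in Q, pdz2 p w * pdz2 p w :=
          integral_add (intOnQ_s2 (c0.mul c0)) (intOnQ_s2 (cpz.mul cpz))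
      _ = (∫ w in Q, (p w) ^ 2) + ∫ w in Q, (pdz2 p w) ^ 2 := by rw [sqe p, sqe (pdz2 p)]
  have step3b : (∫ w in Q, pdy2 g1 w * pdy2 p w)
      = (∫ w in Q, (pdy2 p w) ^ 2) + ∫ w in Q, (pdz2 (pdy2 p) w) ^ 2 := by
    have e : (∫ w in Q, pdy2 g1 w * pdy2 p w)
        = ∫ w in Q, (pdy2 p w - pdz2 (pdz2 (pdy2 p)) w) * pdy2 p w :=
      integral_congr_ae (Filter.Eventually.of_forall fun w => by beta_reduce; rw [hg1y w])
    rw [e]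
    calc (∫ w in Q, (pdy2 p w - pdz2 (pdz2 (pdy2 p)) w) * pdy2 p w)
        = ∫ w in Q, (pdy2 p w * pdy2 p w + pdz2 (pdy2 p) w * pdz2 (pdy2 p) w) :=
          stageZ (pdy2 p) (pdy2 p) hpy hpy bczy
      _ = (∫ w in Q, pdy2 p w * pdy2 p w) + ∫ w in Q, pdz2 (pdy2 p) w * pdz2 (pdy2 p) w :=
          integral_add (intOnQ_s2 (cpy.mul cpy)) (intOnQ_s2 (cpzy.mul cpzy))
      _ = (∫ w in Q, (pdy2 p w) ^ 2) + ∫ w in Q, (pdz2 (pdy2 p) w) ^ 2 := by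
          rw [sqe (pdy2 p), sqe (pdz2 (pdy2 p))]
  have step3c : (∫ w in Q, pdx2 g1 w * pdx2 p w)
      = (∫ w in Q, (pdx2 p w) ^ 2) + ∫ w in Q, (pdz2 (pdx2 p) w) ^ 2 := by
    have e : (∫ w in Q, pdx2 g1 w * pdx2 p w)
        = ∫ w in Q, (pdx2 p w - pdz2 (pdz2 (pdx2 p)) w) * pdx2 p w :=
      integral_congr_ae (Filter.Eventually.of_forall fun w => by beta_reduce; rw [hg1x' w])
    rw [e]
    calc (∫ w in Q, (pdx2 p w - pdz2 (pdz2 (pdx2 p)) w) * pdx2 p w)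
        = ∫ w in Q, (pdx2 p w * pdx2 p w + pdz2 (pdx2 p) w * pdz2 (pdx2 p) w) :=
          stageZ (pdx2 p) (pdx2 p) hpx hpx (fun x hx y hy => bczx x hx y (Set.Ioo_subset_Icc_self hy))
      _ = (∫ w in Q, pdx2 p w * pdx2 p w) + ∫ w in Q, pdz2 (pdx2 p) w * pdz2 (pdx2 p) w :=
          integral_add (intOnQ_s2 (cpx.mul cpx)) (intOnQ_s2 (cpzx.mul cpzx))
      _ = (∫ w in Q, (pdx2 p w) ^ 2) + ∫ w in Q, (pdz2 (pdx2 p) w) ^ 2 := by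
          rw [sqe (pdx2 p), sqe (pdz2 (pdx2 p))]
  have step3d : (∫ w in Q, pdy2 (pdx2 g1) w * pdy2 (pdx2 p) w)
      = (∫ w in Q, (pdy2 (pdx2 p) w) ^ 2) + ∫ w in Q, (pdz2 (pdy2 (pdx2 p)) w) ^ 2 := by
    have e : (∫ w in Q, pdy2 (pdx2 g1) w * pdy2 (pdx2 p) w)
        = ∫ w in Q, (pdy2 (pdx2 p) w - pdz2 (pdz2 (pdy2 (pdx2 p))) w) * pdy2 (pdx2 p) w :=
      integral_congr_ae (Filter.Eventually.of_forall fun w => by beta_reduce; rw [hg1xy w])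
    rw [e]
    calc (∫ w in Q, (pdy2 (pdx2 p) w - pdz2 (pdz2 (pdy2 (pdx2 p))) w) * pdy2 (pdx2 p) w)
        = ∫ w in Q, (pdy2 (pdx2 p) w * pdy2 (pdx2 p) w
            + pdz2 (pdy2 (pdx2 p)) w * pdz2 (pdy2 (pdx2 p)) w) :=
          stageZ (pdy2 (pdx2 p)) (pdy2 (pdx2 p)) hpxy hpxy bczxy
      _ = (∫ w in Q, pdy2 (pdx2 p) w * pdy2 (pdx2 p) w)
            + ∫ w in Q, pdz2 (pdy2 (pdx2 p)) w * pdz2 (pdy2 (pdx2 p)) w :=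
          integral_add (intOnQ_s2 (cpxy.mul cpxy)) (intOnQ_s2 (cpzyx.mul cpzyx))
      _ = (∫ w in Q, (pdy2 (pdx2 p) w) ^ 2) + ∫ w in Q, (pdz2 (pdy2 (pdx2 p)) w) ^ 2 := by
          rw [sqe (pdy2 (pdx2 p)), sqe (pdz2 (pdy2 (pdx2 p)))]
  -- total
  have hMain : (∫ w in Q, Ap w * p w)
      = (∫ w in Q, (p w) ^ 2) + (∫ w in Q, (pdz2 p w) ^ 2)
        + ((∫ w in Q, (pdy2 p w) ^ 2) + (∫ w in Q, (pdz2 (pdy2 p) w) ^ 2))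
        + ((∫ w in Q, (pdx2 p w) ^ 2) + (∫ w in Q, (pdz2 (pdx2 p) w) ^ 2))
        + ((∫ w in Q, (pdy2 (pdx2 p) w) ^ 2) + (∫ w in Q, (pdz2 (pdy2 (pdx2 p)) w) ^ 2)) := by
    rw [key1, add1, step2a, add2, step2b, add3, step3a, step3b, step3c, step3d]
    ring
  -- renaming mixed derivatives
  have cm1 : pdx2 (pdy2 p) = pdy2 (pdx2 p) := comm_xy hp'
  have cm2 : pdy2 (pdz2 p) = pdz2 (pdy2 p) := comm_yz hp'
  have cm3 : pdx2 (pdy2 (pdz2 p)) = pdz2 (pdy2 (pdx2 p)) := by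
    rw [comm_yz hp', comm_xz (contDiff_pdy2 hp'), comm_xy hp']
  have eGrad : (∫ w in Q, ((pdx2 p w) ^ 2 + (pdy2 p w) ^ 2 + (pdz2 p w) ^ 2))
      = (∫ w in Q, (pdx2 p w) ^ 2) + (∫ w in Q, (pdy2 p w) ^ 2)
        + ∫ w in Q, (pdz2 p w) ^ 2 := by
    rw [integral_add (f := fun w => (pdx2 p w) ^ 2 + (pdy2 p w) ^ 2) (g := fun w => (pdz2 p w) ^ 2)
        (intOnQ_s2 ((cpx.pow 2).add (cpy.pow 2))) (intOnQ_s2 (cpz.pow 2)),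
      integral_add (f := fun w => (pdx2 p w) ^ 2) (g := fun w => (pdy2 p w) ^ 2)
        (intOnQ_s2 (cpx.pow 2)) (intOnQ_s2 (cpy.pow 2))]
  have eMix : (∫ w in Q, ((pdy2 (pdx2 p) w) ^ 2 + (pdz2 (pdy2 p) w) ^ 2
        + (pdz2 (pdx2 p) w) ^ 2))
      = (∫ w in Q, (pdy2 (pdx2 p) w) ^ 2) + (∫ w in Q, (pdz2 (pdy2 p) w) ^ 2)
        + ∫ w in Q, (pdz2 (pdx2 p) w) ^ 2 := by
    rw [integral_add (f := fun w => (pdy2 (pdx2 p) w) ^ 2 + (pdz2 (pdy2 p) w) ^ 2)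
        (g := fun w => (pdz2 (pdx2 p) w) ^ 2)
        (intOnQ_s2 ((cpxy.pow 2).add (cpzy.pow 2))) (intOnQ_s2 (cpzx.pow 2)),
      integral_add (f := fun w => (pdy2 (pdx2 p) w) ^ 2) (g := fun w => (pdz2 (pdy2 p) w) ^ 2)
        (intOnQ_s2 (cpxy.pow 2)) (intOnQ_s2 (cpzy.pow 2))]
  have main : (∫ z in Q, Ap z * p z)
      = (∫ z in Q, (p z) ^ 2)
        + (∫ z in Q, (pdx2 p z) ^ 2 + (pdy2 p z) ^ 2 + (pdz2 p z) ^ 2)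
        + (∫ z in Q, (pdx2 (pdy2 p) z) ^ 2 + (pdy2 (pdz2 p) z) ^ 2
            + (pdz2 (pdx2 p) z) ^ 2)
        + (∫ z in Q, (pdx2 (pdy2 (pdz2 p)) z) ^ 2) := by
    rw [cm3, cm1, cm2, hMain, eGrad, eMix]
    ring
  refine ⟨main, ?_⟩
  have nn : ∀ f : ℝ × ℝ × ℝ → ℝ, 0 ≤ ∫ w in Q, (f w) ^ 2 :=
    fun f => setIntegral_nonneg hQmeas (fun w _ => sq_nonneg _)
  have n1 := nn p
  have n2 := nn (pdy2 (pdx2 p))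
  have n3 := nn (pdz2 (pdy2 p))
  have n4 := nn (pdz2 (pdx2 p))
  have n5 := nn (pdz2 (pdy2 (pdx2 p)))
  have eMix' : (∫ z in Q, (pdx2 (pdy2 p) z) ^ 2 + (pdy2 (pdz2 p) z) ^ 2
        + (pdz2 (pdx2 p) z) ^ 2)
      = (∫ w in Q, (pdy2 (pdx2 p) w) ^ 2) + (∫ w in Q, (pdz2 (pdy2 p) w) ^ 2)
        + ∫ w in Q, (pdz2 (pdx2 p) w) ^ 2 := by
    rw [cm1, cm2]; exact eMix
  have eTriple : (∫ z in Q, (pdx2 (pdy2 (pdz2 p)) z) ^ 2)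
      = ∫ w in Q, (pdz2 (pdy2 (pdx2 p)) w) ^ 2 := by rw [cm3]
  rw [main, eMix', eTriple]
  linarith
end

section
/- Consider the sequence w^k := u^k(1,·) on (0,1) obeying the recursion w^{k+1} − w^k − (τ/2)∂_{yy}(w^{k+1} − w^k) = −2w^k with (w^{k+1} − w^k)|_{y=0,1} = 0 and w^0 = 0. Then w^k = 0 for all k ≥ 0. Consequently, in the 2D Peaceman–Rachford direction-splitting scheme with zero initial velocity trace, the velocity iterates satisfy the full Dirichlet boundary condition u^k|_{∂Ω} = 0 at all integer time steps, even though the half-step boundary condition is only imposed at x = 0,1. -/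
/-!
Set `v = w^{k+1} - w^k`. If `w^k = 0`, the recursion says `v'' = (2/τ) v` on `[0,1]`, with
`v = 0` at both ends. At an interior positive maximum of `v` this forces `v'' > 0`, which is
impossible at a local maximum; applied to `v` and `-v` this gives `v = 0`, hence `w^{k+1} = 0`.
-/

open Set Filter Topology

theorem IsLocalMax.deriv_deriv_nonpos {f : ℝ → ℝ} {c : ℝ} (h : IsLocalMax f c)
    (hc : ContinuousAt f c) : deriv (deriv f) c ≤ 0 := by
  by_contra! hpos
  have hmin : IsLocalMin f c := isLocalMin_of_deriv_deriv_pos hpos h.deriv_eq_zero hc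
  have hconst : f =ᶠ[𝓝 c] fun _ => f c :=
    (h.and hmin).mono fun _ hx => le_antisymm hx.1 hx.2
  have hzero : deriv (deriv f) c = 0 := by
    rw [hconst.deriv.deriv_eq]
    simp
  exact hpos.ne' hzero

theorem nonpos_of_deriv_deriv_pos_of_pos {v : ℝ → ℝ} {a b : ℝ} (hv : ContinuousOn v (Icc a b))
    (hsub : ∀ y ∈ Ioo a b, 0 < v y → 0 < deriv (deriv v) y) (ha : v a ≤ 0) (hb : v b ≤ 0) :
    ∀ y ∈ Icc a b, v y ≤ 0 := by
  intro y hy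
  by_contra! hy_pos
  obtain ⟨c, hc, hmax⟩ := isCompact_Icc.exists_isMaxOn ⟨y, hy⟩ hv
  have hc_pos : 0 < v c := hy_pos.trans_le (hmax hy)
  have hac : a < c := hc.1.lt_of_ne fun h => by rw [← h] at hc_pos; linarith
  have hcb : c < b := hc.2.lt_of_ne fun h => by rw [h] at hc_pos; linarith
  have hnhds : Icc a b ∈ 𝓝 c := Icc_mem_nhds hac hcb
  have hnonpos := (hmax.isLocalMax hnhds).deriv_deriv_nonpos (hv.continuousAt hnhds)
  linarith [hsub c ⟨hac, hcb⟩ hc_pos]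

theorem eq_zero_of_deriv_deriv_eq_mul_self {v : ℝ → ℝ} {a b κ : ℝ} (hκ : 0 < κ)
    (hv : ContinuousOn v (Icc a b)) (hode : ∀ y ∈ Ioo a b, deriv (deriv v) y = κ * v y)
    (ha : v a = 0) (hb : v b = 0) :
    ∀ y ∈ Icc a b, v y = 0 := by
  have hle := nonpos_of_deriv_deriv_pos_of_pos hv
    (fun y hy hpos => by rw [hode y hy]; positivity) ha.le hb.le
  have hge := nonpos_of_deriv_deriv_pos_of_pos (v := -v) hv.neg
    (fun y hy hpos => by
      simp only [deriv.neg', deriv.fun_neg, Pi.neg_apply, hode y hy] at hpos ⊢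
      nlinarith)
    (by simp [ha]) (by simp [hb])
  intro y hy
  exact le_antisymm (hle y hy) (neg_nonpos.mp (hge y hy))

/-- The boundary traces `w^k = u^k(1,·)` of the 2D Peaceman–Rachford direction-splitting
scheme obey `w^{k+1} − w^k − (τ/2)∂_{yy}(w^{k+1} − w^k) = −2w^k` with
`(w^{k+1} − w^k)|_{y=0,1} = 0` and `w⁰ = 0`; hence `w^k = 0` for all `k`, i.e. the
velocity iterates satisfy the full Dirichlet boundary condition at integer time steps. -/
theorem stmt8 (τ : ℝ) (hτ : 0 < τ) (w : ℕ → ℝ → ℝ)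
    (hw : ∀ k, ContDiff ℝ 2 (w k))
    (hbc : ∀ k, w (k + 1) 0 - w k 0 = 0 ∧ w (k + 1) 1 - w k 1 = 0)
    (hrec : ∀ k, ∀ y ∈ Set.Icc (0 : ℝ) 1,
      (w (k + 1) y - w k y)
        - (τ / 2) * iteratedDeriv 2 (fun t => w (k + 1) t - w k t) y = -2 * w k y)
    (h0 : ∀ y ∈ Set.Icc (0 : ℝ) 1, w 0 y = 0) :
    ∀ k, ∀ y ∈ Set.Icc (0 : ℝ) 1, w k y = 0 := by
  intro k
  induction k with
  | zero => exact h0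
  | succ k ih =>
    have hode : ∀ y ∈ Ioo (0 : ℝ) 1, deriv (deriv fun t => w (k + 1) t - w k t) y
        = (2 / τ) * (w (k + 1) y - w k y) := by
      intro y hy
      have h := hrec k y (Ioo_subset_Icc_self hy)
      rw [iteratedDeriv_succ, iteratedDeriv_one] at h
      field_simp
      linarith [ih y (Ioo_subset_Icc_self hy)]
    have hdiff_zero := eq_zero_of_deriv_deriv_eq_mul_self
      (v := fun t => w (k + 1) t - w k t) (by positivity)
      ((hw (k + 1)).continuous.sub (hw k).continuous).continuousOn hode (hbc k).1 (hbc k).2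
    intro y hy
    linarith [hdiff_zero y hy, ih y hy]
end
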